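/- arXiv:1104.0268 — 3 statements merged into one kernel-verified Lean document; each statement's English description precedes it below -/
import Mathlib

section
/- The k-algebra homomorphism from the group algebra k[ℤ^θ × ℤ^θ] to 𝒰(q), sending the basis element corresponding to the group element (a, b) ∈ ℤ^θ × ℤ^θ to K_1^{a_1}⋯K_θ^{a_θ}·L_1^{b_1}⋯L_θ^{b_θ} (negative exponents interpreted via K_i⁻ and L_i⁻), is injective and its image is U⁰(q); in particular U⁰(q) is isomorphic as a k-algebra to the group algebra of the free abelian group ℤ^{2θ}. -/
/-- The generators `E_i, F_i, K_i, K_i⁻, L_i, L_i⁻` of the Drinfeld double `𝒰(q)`. -/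
inductive UGen (θ : ℕ) : Type
  | E : Fin θ → UGen θ
  | F : Fin θ → UGen θ
  | K : Fin θ → UGen θ
  | Kinv : Fin θ → UGen θ
  | L : Fin θ → UGen θ
  | Linv : Fin θ → UGen θ

/-- The toral generators, i.e. those among `K_i, K_i⁻, L_i, L_i⁻`. -/
def UGen.IsToral {θ : ℕ} : UGen θ → Prop
  | .E _ => False
  | .F _ => False
  | _ => True

variable (k : Type*) [Field k] {θ : ℕ}

/-- The image of a generator in the free algebra. -/
noncomputable def Ugen (g : UGen θ) : FreeAlgebra k (UGen θ) := FreeAlgebra.ι k g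

/-- The defining relations of the algebra `𝒰(q)`. -/
inductive URel (q : Fin θ → Fin θ → kˣ) :
    FreeAlgebra k (UGen θ) → FreeAlgebra k (UGen θ) → Prop
  | toral_comm (X Y : UGen θ) (hX : X.IsToral) (hY : Y.IsToral) :
      URel q (Ugen k X * Ugen k Y) (Ugen k Y * Ugen k X)
  | K_Kinv (i : Fin θ) : URel q (Ugen k (.K i) * Ugen k (.Kinv i)) 1
  | Kinv_K (i : Fin θ) : URel q (Ugen k (.Kinv i) * Ugen k (.K i)) 1
  | L_Linv (i : Fin θ) : URel q (Ugen k (.L i) * Ugen k (.Linv i)) 1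
  | Linv_L (i : Fin θ) : URel q (Ugen k (.Linv i) * Ugen k (.L i)) 1
  | K_E (i j : Fin θ) : URel q (Ugen k (.K i) * Ugen k (.E j))
      ((q i j : k) • (Ugen k (.E j) * Ugen k (.K i)))
  | L_E (i j : Fin θ) : URel q (Ugen k (.L i) * Ugen k (.E j))
      ((q j i : k)⁻¹ • (Ugen k (.E j) * Ugen k (.L i)))
  | K_F (i j : Fin θ) : URel q (Ugen k (.K i) * Ugen k (.F j))
      ((q i j : k)⁻¹ • (Ugen k (.F j) * Ugen k (.K i)))
  | L_F (i j : Fin θ) : URel q (Ugen k (.L i) * Ugen k (.F j))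
      ((q j i : k) • (Ugen k (.F j) * Ugen k (.L i)))
  | E_F (i j : Fin θ) : URel q (Ugen k (.E i) * Ugen k (.F j) - Ugen k (.F j) * Ugen k (.E i))
      (if i = j then Ugen k (.K i) - Ugen k (.L i) else 0)

/-- The algebra `𝒰(q)`: the quotient of the free algebra on the generators
`E_i, F_i, K_i, K_i⁻, L_i, L_i⁻` by the defining relations. -/
noncomputable abbrev UqAlgebra (q : Fin θ → Fin θ → kˣ) := RingQuot (URel k q)

variable (q : Fin θ → Fin θ → kˣ)

/-- The generator `E_i` of `𝒰(q)`. -/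
noncomputable def UE (i : Fin θ) : UqAlgebra k q := RingQuot.mkAlgHom k (URel k q) (Ugen k (.E i))
/-- The generator `F_i` of `𝒰(q)`. -/
noncomputable def UF (i : Fin θ) : UqAlgebra k q := RingQuot.mkAlgHom k (URel k q) (Ugen k (.F i))
/-- The generator `K_i` of `𝒰(q)`. -/
noncomputable def UK (i : Fin θ) : UqAlgebra k q := RingQuot.mkAlgHom k (URel k q) (Ugen k (.K i))
/-- The generator `K_i⁻` of `𝒰(q)`. -/
noncomputable def UKinv (i : Fin θ) : UqAlgebra k q :=
  RingQuot.mkAlgHom k (URel k q) (Ugen k (.Kinv i))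
/-- The generator `L_i` of `𝒰(q)`. -/
noncomputable def UL (i : Fin θ) : UqAlgebra k q := RingQuot.mkAlgHom k (URel k q) (Ugen k (.L i))
/-- The generator `L_i⁻` of `𝒰(q)`. -/
noncomputable def ULinv (i : Fin θ) : UqAlgebra k q :=
  RingQuot.mkAlgHom k (URel k q) (Ugen k (.Linv i))


/-- `K_i^n` for `n : ℤ`, with negative exponents interpreted via `K_i⁻`. -/
noncomputable def UKzpow (i : Fin θ) (n : ℤ) : UqAlgebra k q :=
  if 0 ≤ n then UK k q i ^ n.toNat else UKinv k q i ^ (-n).toNat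

/-- `L_i^n` for `n : ℤ`, with negative exponents interpreted via `L_i⁻`. -/
noncomputable def ULzpow (i : Fin θ) (n : ℤ) : UqAlgebra k q :=
  if 0 ≤ n then UL k q i ^ n.toNat else ULinv k q i ^ (-n).toNat

/-- The subalgebra `U⁰(q)` of `𝒰(q)` generated by the `K_i, K_i⁻, L_i, L_i⁻`. -/
noncomputable def Uzero : Subalgebra k (UqAlgebra k q) :=
  Algebra.adjoin k
    {x | ∃ i : Fin θ, x = UK k q i ∨ x = UKinv k q i ∨ x = UL k q i ∨ x = ULinv k q i}

/-!
The `K_i, L_i` are pairwise commuting units, so `(a, b) ↦ K^a L^b` is a group homomorphism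
`ℤ^θ × ℤ^θ → U⁰(q)ˣ`; the induced algebra map hits the generators `K_i^{±1}, L_i^{±1}` of `U⁰(q)`.
For injectivity, `𝒰(q)` acts on the free module with basis `(words in the F_i) × ℤ^θ × ℤ^θ`
(the module induced from the regular representation of `k[ℤ^θ × ℤ^θ]`): `F` prepends a letter,
`K` and `L` act diagonally with the scalars forced by the commutation relations, and `E` acts
through `[E_i, F_j] = δ_ij (K_i - L_i)`. There `K^a L^b` sends `([], 0)` to `([], (a, b))`, so
the algebra map followed by this representation is injective.
-/

open Multiplicative

abbrev ToralLattice (θ : ℕ) : Type := (Fin θ → ℤ) × (Fin θ → ℤ)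

theorem ofAdd_eq_prod_ofFn_single (x : ToralLattice θ) :
    ofAdd x = (List.ofFn fun i => ofAdd (Pi.single i (x.1 i), (0 : Fin θ → ℤ))).prod *
      (List.ofFn fun i => ofAdd ((0 : Fin θ → ℤ), Pi.single i (x.2 i))).prod := by
  simp only [List.prod_ofFn, ← ofAdd_sum, ← ofAdd_add]
  congr 1
  ext i <;> simp [Prod.fst_sum, Prod.snd_sum, Finset.sum_apply, Pi.single_apply]

theorem ToralLattice.monoidHom_ext {M : Type*} [Monoid M]
    {g h : Multiplicative (ToralLattice θ) →* M}
    (hK : ∀ i, g (ofAdd (Pi.single i 1, 0)) = h (ofAdd (Pi.single i 1, 0)))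
    (hL : ∀ i, g (ofAdd (0, Pi.single i 1)) = h (ofAdd (0, Pi.single i 1))) : g = h := by
  have along (e : ℤ →+ ToralLattice θ) (he : g (ofAdd (e 1)) = h (ofAdd (e 1))) (n : ℤ) :
      g (ofAdd (e n)) = h (ofAdd (e n)) :=
    DFunLike.congr_fun (MonoidHom.ext_mint (f := g.comp e.toMultiplicative)
      (g := h.comp e.toMultiplicative) he) (ofAdd n)
  refine MonoidHom.ext fun x => ?_
  rw [← ofAdd_toAdd x, ofAdd_eq_prod_ofFn_single x.toAdd]
  simp only [map_mul, map_list_prod, List.map_ofFn]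
  congr 3 <;> funext i
  · exact along ((AddMonoidHom.inl _ _).comp (AddMonoidHom.single (fun _ => ℤ) i)) (hK i) _
  · exact along ((AddMonoidHom.inr _ _).comp (AddMonoidHom.single (fun _ => ℤ) i)) (hL i) _

theorem Units.val_zpow_eq_ite {M : Type*} [Monoid M] (u : Mˣ) (n : ℤ) :
    ((u ^ n : Mˣ) : M) =
      if 0 ≤ n then (u : M) ^ n.toNat else ((u⁻¹ : Mˣ) : M) ^ (-n).toNat := by
  split_ifs with hn
  · rw [← Int.toNat_of_nonneg hn, zpow_natCast, Units.val_pow_eq_pow_val, Int.toNat_natCast]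
  · rw [← neg_neg n, ← Int.toNat_of_nonneg (by omega : 0 ≤ -n), zpow_neg, zpow_natCast,
      ← inv_pow, Units.val_pow_eq_pow_val, neg_neg, Int.toNat_natCast]

lemma toral_gens_commute {x y : UqAlgebra k q}
    (hx : x ∈ {x | ∃ i : Fin θ,
      x = UK k q i ∨ x = UKinv k q i ∨ x = UL k q i ∨ x = ULinv k q i})
    (hy : y ∈ {x | ∃ i : Fin θ,
      x = UK k q i ∨ x = UKinv k q i ∨ x = UL k q i ∨ x = ULinv k q i}) :
    x * y = y * x := by
  have key (X Y : UGen θ) (hX : X.IsToral) (hY : Y.IsToral) :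
      RingQuot.mkAlgHom k (URel k q) (Ugen k X) * RingQuot.mkAlgHom k (URel k q) (Ugen k Y) =
        RingQuot.mkAlgHom k (URel k q) (Ugen k Y) * RingQuot.mkAlgHom k (URel k q) (Ugen k X) := by
    simpa using RingQuot.mkAlgHom_rel k (URel.toral_comm (q := q) X Y hX hY)
  obtain ⟨i, rfl | rfl | rfl | rfl⟩ := hx <;> obtain ⟨j, rfl | rfl | rfl | rfl⟩ := hy <;>
    exact key _ _ trivial trivial

instance : IsMulCommutative (Uzero k q)ˣ :=
  have : IsMulCommutative (Uzero k q) := Algebra.isMulCommutative_adjoin k fun _ hx _ hy =>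
    toral_gens_commute k q hx hy
  ⟨⟨fun u v => Units.ext (mul_comm' (u : Uzero k q) v)⟩⟩

noncomputable def UKunit (i : Fin θ) : (Uzero k q)ˣ where
  val := ⟨UK k q i, Algebra.subset_adjoin ⟨i, Or.inl rfl⟩⟩
  inv := ⟨UKinv k q i, Algebra.subset_adjoin ⟨i, Or.inr (Or.inl rfl)⟩⟩
  val_inv := Subtype.ext <| by
    simpa [UK, UKinv] using RingQuot.mkAlgHom_rel k (URel.K_Kinv (q := q) i)
  inv_val := Subtype.ext <| by
    simpa [UK, UKinv] using RingQuot.mkAlgHom_rel k (URel.Kinv_K (q := q) i)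

noncomputable def ULunit (i : Fin θ) : (Uzero k q)ˣ where
  val := ⟨UL k q i, Algebra.subset_adjoin ⟨i, Or.inr (Or.inr (Or.inl rfl))⟩⟩
  inv := ⟨ULinv k q i, Algebra.subset_adjoin ⟨i, Or.inr (Or.inr (Or.inr rfl))⟩⟩
  val_inv := Subtype.ext <| by
    simpa [UL, ULinv] using RingQuot.mkAlgHom_rel k (URel.L_Linv (q := q) i)
  inv_val := Subtype.ext <| by
    simpa [UL, ULinv] using RingQuot.mkAlgHom_rel k (URel.Linv_L (q := q) i)

lemma UKzpow_eq_val_zpow (i : Fin θ) (n : ℤ) :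
    UKzpow k q i n = ((UKunit k q i ^ n : (Uzero k q)ˣ) : Uzero k q) := by
  rw [Units.val_zpow_eq_ite, UKzpow]
  split_ifs <;> simp [UKunit]

lemma ULzpow_eq_val_zpow (i : Fin θ) (n : ℤ) :
    ULzpow k q i n = ((ULunit k q i ^ n : (Uzero k q)ˣ) : Uzero k q) := by
  rw [Units.val_zpow_eq_ite, ULzpow]
  split_ifs <;> simp [ULunit]

open scoped IsMulCommutative in
noncomputable def toralHom : Multiplicative (ToralLattice θ) →* (Uzero k q)ˣ where
  toFun x := (∏ i, UKunit k q i ^ x.toAdd.1 i) * ∏ i, ULunit k q i ^ x.toAdd.2 i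
  map_one' := by simp
  map_mul' x y := by
    simp only [toAdd_mul, Prod.fst_add, Prod.snd_add, Pi.add_apply, zpow_add,
      Finset.prod_mul_distrib]
    exact mul_mul_mul_comm _ _ _ _

open scoped IsMulCommutative in
lemma toralHom_single_fst (i : Fin θ) (n : ℤ) :
    toralHom k q (ofAdd (Pi.single i n, 0)) = UKunit k q i ^ n := by
  simp [toralHom, Pi.single_apply, apply_ite]

open scoped IsMulCommutative in
lemma toralHom_single_snd (i : Fin θ) (n : ℤ) :
    toralHom k q (ofAdd (0, Pi.single i n)) = ULunit k q i ^ n := by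
  simp [toralHom, Pi.single_apply, apply_ite]

noncomputable def toralMap : Multiplicative (ToralLattice θ) →* UqAlgebra k q :=
  (Uzero k q).val.toMonoidHom.comp ((Units.coeHom _).comp (toralHom k q))

lemma toralMap_single_fst (i : Fin θ) (n : ℤ) :
    toralMap k q (ofAdd (Pi.single i n, 0)) = UKzpow k q i n := by
  simp [toralMap, toralHom_single_fst, UKzpow_eq_val_zpow]

lemma toralMap_single_snd (i : Fin θ) (n : ℤ) :
    toralMap k q (ofAdd (0, Pi.single i n)) = ULzpow k q i n := by
  simp [toralMap, toralHom_single_snd, ULzpow_eq_val_zpow]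

lemma toralMap_ofAdd (a b : Fin θ → ℤ) :
    toralMap k q (ofAdd (a, b)) =
      (List.ofFn fun i : Fin θ => UKzpow k q i (a i)).prod *
        (List.ofFn fun i : Fin θ => ULzpow k q i (b i)).prod := by
  rw [ofAdd_eq_prod_ofFn_single]
  simp only [map_mul, map_list_prod, List.map_ofFn, Function.comp_def, toralMap_single_fst,
    toralMap_single_snd]

noncomputable abbrev toralLift : AddMonoidAlgebra k (ToralLattice θ) →ₐ[k] UqAlgebra k q :=
  AddMonoidAlgebra.lift k _ _ (toralMap k q)

lemma range_toralLift_le_Uzero : (toralLift k q).range ≤ Uzero k q := by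
  rintro _ ⟨y, rfl⟩
  induction y using AddMonoidAlgebra.induction_linear with
  | zero => simp
  | add y z hy hz => simpa using add_mem hy hz
  | single x r =>
    simpa [toralMap] using Subalgebra.smul_mem _ (toralHom k q (ofAdd x) : Uzero k q).2 r

lemma Uzero_le_range_toralLift : Uzero k q ≤ (toralLift k q).range := by
  have hK (i : Fin θ) (n : ℤ) : UKzpow k q i n ∈ (toralLift k q).range :=
    ⟨AddMonoidAlgebra.single (Pi.single i n, 0) 1, by simp [toralMap_single_fst]⟩
  have hL (i : Fin θ) (n : ℤ) : ULzpow k q i n ∈ (toralLift k q).range :=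
    ⟨AddMonoidAlgebra.single (0, Pi.single i n) 1, by simp [toralMap_single_snd]⟩
  refine Algebra.adjoin_le ?_
  rintro _ ⟨i, rfl | rfl | rfl | rfl⟩
  · simpa [UKzpow] using hK i 1
  · simpa [UKzpow] using hK i (-1)
  · simpa [ULzpow] using hL i 1
  · simpa [ULzpow] using hL i (-1)

-- `(w, (a, b))` stands for `F_{w₁} ⋯ F_{wₙ} K^a L^b`.
abbrev VermaBasis (θ : ℕ) : Type := List (Fin θ) × ToralLattice θ

-- `K^a L^b F_l = fChar (a, b) l • F_l K^a L^b` in `𝒰(q)`.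
noncomputable def fChar (x : ToralLattice θ) (l : Fin θ) : kˣ :=
  ∏ i, q i l ^ (-x.1 i) * q l i ^ x.2 i

lemma fChar_add (x y : ToralLattice θ) (l : Fin θ) :
    fChar k q (x + y) l = fChar k q x l * fChar k q y l := by
  simp only [fChar, ← Finset.prod_mul_distrib, Prod.fst_add, Prod.snd_add, Pi.add_apply, neg_add,
    zpow_add]
  exact Finset.prod_congr rfl fun _ _ => mul_mul_mul_comm _ _ _ _

lemma fChar_single_fst (i l : Fin θ) (n : ℤ) :
    fChar k q (Pi.single i n, 0) l = q i l ^ (-n) := by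
  simp [fChar, Pi.single_apply, apply_ite]

lemma fChar_single_snd (i l : Fin θ) (n : ℤ) :
    fChar k q (0, Pi.single i n) l = q l i ^ n := by
  simp [fChar, Pi.single_apply, apply_ite]

noncomputable def wordChar (x : ToralLattice θ) (w : List (Fin θ)) : kˣ :=
  (w.map (fChar k q x)).prod

lemma wordChar_zero (w : List (Fin θ)) : wordChar k q 0 w = 1 :=
  List.prod_eq_one fun u hu => by
    obtain ⟨l, -, rfl⟩ := List.mem_map.mp hu
    simp [fChar]

lemma wordChar_add (x y : ToralLattice θ) (w : List (Fin θ)) :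
    wordChar k q (x + y) w = wordChar k q x w * wordChar k q y w := by
  simp only [wordChar, ← List.prod_map_mul, ← fChar_add]

lemma wordChar_cons (x : ToralLattice θ) (i : Fin θ) (w : List (Fin θ)) :
    wordChar k q x (i :: w) = fChar k q x i * wordChar k q x w := by
  simp [wordChar]

noncomputable def lowerOp (i : Fin θ) : Module.End k (VermaBasis θ →₀ k) :=
  Finsupp.lmapDomain k k fun p => (i :: p.1, p.2)

lemma lowerOp_single (i : Fin θ) (w : List (Fin θ)) (x : ToralLattice θ) (c : k) :
    lowerOp k i (Finsupp.single (w, x) c) = Finsupp.single (i :: w, x) c := by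
  simp [lowerOp]

noncomputable def toralOp (x : ToralLattice θ) : Module.End k (VermaBasis θ →₀ k) :=
  Finsupp.linearCombination k fun p => Finsupp.single (p.1, p.2 + x) (wordChar k q x p.1 : k)

lemma toralOp_single (x : ToralLattice θ) (w : List (Fin θ)) (z : ToralLattice θ) (c : k) :
    toralOp k q x (Finsupp.single (w, z) c) =
      Finsupp.single (w, z + x) (c * wordChar k q x w) := by
  simp only [toralOp, Finsupp.linearCombination_single, Finsupp.smul_single, smul_eq_mul]

noncomputable def toralRep :
    Multiplicative (ToralLattice θ) →* Module.End k (VermaBasis θ →₀ k) where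
  toFun x := toralOp k q x.toAdd
  map_one' := Finsupp.lhom_ext fun ⟨w, z⟩ c => by simp [toralOp_single, wordChar_zero]
  map_mul' x y := Finsupp.lhom_ext fun ⟨w, z⟩ c => by
    simp only [toAdd_mul, Module.End.mul_apply, toralOp_single, wordChar_add, Units.val_mul]
    congr 1
    · congr 1; abel
    · ring

lemma toralRep_single (x : ToralLattice θ) (w : List (Fin θ)) (z : ToralLattice θ) (c : k) :
    toralRep k q (ofAdd x) (Finsupp.single (w, z) c) =
      Finsupp.single (w, z + x) (c * wordChar k q x w) :=
  toralOp_single k q x w z c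

lemma toralRep_comm (x y : Multiplicative (ToralLattice θ)) :
    toralRep k q x * toralRep k q y = toralRep k q y * toralRep k q x := by
  rw [← map_mul, ← map_mul, mul_comm]

lemma toralRep_mul_eq_one {x y : ToralLattice θ} (h : x + y = 0) :
    toralRep k q (ofAdd x) * toralRep k q (ofAdd y) = 1 := by
  rw [← map_mul, ← ofAdd_add, h, ofAdd_zero, map_one]

lemma toralRep_mul_lowerOp (x : ToralLattice θ) (i : Fin θ) :
    toralRep k q (ofAdd x) * lowerOp k i =
      (fChar k q x i : k) • (lowerOp k i * toralRep k q (ofAdd x)) := by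
  refine Finsupp.lhom_ext fun ⟨w, z⟩ c => ?_
  simp only [Module.End.mul_apply, LinearMap.smul_apply, lowerOp_single, toralRep_single,
    wordChar_cons, Finsupp.smul_single, smul_eq_mul, Units.val_mul, mul_left_comm c]

-- `E_i F_j v = F_j E_i v + δ_ij (K_i - L_i) v`, and `E_i` kills the vectors with empty word.
noncomputable def raiseTerm (i : Fin θ) :
    List (Fin θ) → ToralLattice θ → (VermaBasis θ →₀ k)
  | [], _ => 0
  | j :: w, x =>
    (if i = j then
      (toralRep k q (ofAdd (Pi.single i 1, 0)) - toralRep k q (ofAdd (0, Pi.single i 1)))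
        (Finsupp.single (w, x) 1)
    else 0) + lowerOp k j (raiseTerm i w x)

noncomputable def raiseOp (i : Fin θ) : Module.End k (VermaBasis θ →₀ k) :=
  Finsupp.linearCombination k fun p => raiseTerm k q i p.1 p.2

lemma raiseOp_single (i : Fin θ) (w : List (Fin θ)) (x : ToralLattice θ) (c : k) :
    raiseOp k q i (Finsupp.single (w, x) c) = c • raiseTerm k q i w x := by
  simp [raiseOp]

lemma raiseOp_mul_lowerOp_sub (i j : Fin θ) :
    raiseOp k q i * lowerOp k j - lowerOp k j * raiseOp k q i =
      if i = j then
        toralRep k q (ofAdd (Pi.single i 1, 0)) - toralRep k q (ofAdd (0, Pi.single i 1))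
      else 0 := by
  refine Finsupp.lhom_ext' fun ⟨w, x⟩ => LinearMap.ext_ring ?_
  simp only [LinearMap.comp_apply, Finsupp.lsingle_apply, LinearMap.sub_apply,
    Module.End.mul_apply, lowerOp_single, raiseOp_single, raiseTerm, one_smul, add_sub_cancel_right]
  split_ifs <;> simp

lemma toralRep_raiseTerm (y : ToralLattice θ) (i : Fin θ) (w : List (Fin θ))
    (x : ToralLattice θ) :
    toralRep k q (ofAdd y) (raiseTerm k q i w x) =
      ((↑(fChar k q y i)⁻¹ : k) * wordChar k q y w) • raiseTerm k q i w (x + y) := by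
  induction w with
  | nil => simp [raiseTerm]
  | cons j w ih =>
    have hT := LinearMap.congr_fun (toralRep_mul_lowerOp k q y j) (raiseTerm k q i w x)
    simp only [Module.End.mul_apply, LinearMap.smul_apply] at hT
    rw [raiseTerm, raiseTerm, map_add, hT, ih, map_smul, smul_smul, smul_add, wordChar_cons]
    congr 1
    · split_ifs with hij
      · subst hij
        have hcomm (z) (v : VermaBasis θ →₀ k) :
            toralRep k q (ofAdd y) (toralRep k q z v) =
              toralRep k q z (toralRep k q (ofAdd y) v) := by
          rw [← Module.End.mul_apply, toralRep_comm, Module.End.mul_apply]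
        rw [LinearMap.sub_apply, map_sub, hcomm, hcomm, ← LinearMap.sub_apply, toralRep_single,
          one_mul, ← map_smul, Finsupp.smul_single_one, Units.val_mul, Units.inv_mul_cancel_left]
      · simp
    · congr 1
      simp only [Units.val_mul]
      ring

lemma toralRep_mul_raiseOp (y : ToralLattice θ) (i : Fin θ) :
    toralRep k q (ofAdd y) * raiseOp k q i =
      (↑(fChar k q y i)⁻¹ : k) • (raiseOp k q i * toralRep k q (ofAdd y)) := by
  refine Finsupp.lhom_ext fun ⟨w, x⟩ c => ?_
  simp only [Module.End.mul_apply, LinearMap.smul_apply, raiseOp_single, toralRep_single,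
    map_smul, toralRep_raiseTerm, smul_smul, mul_left_comm c]

def toralExp : UGen θ → ToralLattice θ
  | .K i => (Pi.single i 1, 0)
  | .Kinv i => -(Pi.single i 1, 0)
  | .L i => (0, Pi.single i 1)
  | .Linv i => -(0, Pi.single i 1)
  | _ => 0

noncomputable def genOp : UGen θ → Module.End k (VermaBasis θ →₀ k)
  | .E i => raiseOp k q i
  | .F i => lowerOp k i
  | X => toralRep k q (ofAdd (toralExp X))

lemma genOp_of_isToral {X : UGen θ} (hX : X.IsToral) :
    genOp k q X = toralRep k q (ofAdd (toralExp X)) := by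
  cases X
  iterate 2 exact hX.elim
  all_goals rfl

lemma genOp_rel {x y : FreeAlgebra k (UGen θ)} (h : URel k q x y) :
    FreeAlgebra.lift k (genOp k q) x = FreeAlgebra.lift k (genOp k q) y := by
  induction h with
  | toral_comm X Y hX hY =>
    simp only [Ugen, map_mul, FreeAlgebra.lift_ι_apply, genOp_of_isToral k q hX,
      genOp_of_isToral k q hY, toralRep_comm]
  | K_Kinv i | Kinv_K i | L_Linv i | Linv_L i =>
    simp only [Ugen, map_mul, map_one, FreeAlgebra.lift_ι_apply]
    exact toralRep_mul_eq_one k q (by simp [toralExp])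
  | K_E i j =>
    simp [Ugen, genOp, toralExp, toralRep_mul_raiseOp, fChar_single_fst]
  | L_E i j =>
    simp [Ugen, genOp, toralExp, toralRep_mul_raiseOp, fChar_single_snd]
  | K_F i j =>
    simp [Ugen, genOp, toralExp, toralRep_mul_lowerOp, fChar_single_fst]
  | L_F i j =>
    simp [Ugen, genOp, toralExp, toralRep_mul_lowerOp, fChar_single_snd]
  | E_F i j =>
    simp only [Ugen, map_sub, map_mul, FreeAlgebra.lift_ι_apply]
    rw [genOp, genOp, raiseOp_mul_lowerOp_sub]
    split_ifs <;> simp [genOp, toralExp]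

noncomputable def vermaRep : UqAlgebra k q →ₐ[k] Module.End k (VermaBasis θ →₀ k) :=
  RingQuot.liftAlgHom k ⟨FreeAlgebra.lift k (genOp k q), fun _ _ => genOp_rel k q⟩

lemma vermaRep_comp_toralLift :
    (vermaRep k q).comp (toralLift k q) =
      AddMonoidAlgebra.lift k _ _ (toralRep k q) := by
  rw [← Equiv.symm_apply_eq]
  refine ToralLattice.monoidHom_ext (fun i => ?_) (fun i => ?_)
  · simp [toralMap_single_fst, UKzpow, UK, vermaRep, Ugen, genOp, toralExp]
  · simp [toralMap_single_snd, ULzpow, UL, vermaRep, Ugen, genOp, toralExp]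

lemma liftToralRep_apply_vacuum (y : AddMonoidAlgebra k (ToralLattice θ)) :
    AddMonoidAlgebra.lift k _ _ (toralRep k q) y (Finsupp.single ([], 0) 1) =
      Finsupp.mapDomain (fun x => ([], x)) y.coeff := by
  induction y using AddMonoidAlgebra.induction_linear with
  | zero => simp
  | add y z hy hz => simp [hy, hz, Finsupp.mapDomain_add]
  | single x r => simp [toralRep_single, wordChar, Finsupp.mapDomain_single]

lemma liftToralRep_injective :
    Function.Injective (AddMonoidAlgebra.lift k _ _ (toralRep k q)) := by
  intro y z h
  have := congr($h (Finsupp.single ([], 0) 1))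
  rw [liftToralRep_apply_vacuum, liftToralRep_apply_vacuum] at this
  exact AddMonoidAlgebra.coeff_injective
    (Finsupp.mapDomain_injective (fun _ _ => congrArg Prod.snd) this)

/-- The algebra homomorphism from the group algebra `k[ℤ^θ × ℤ^θ]` to `𝒰(q)` sending the
basis element of the group element `(a,b)` to `K_1^{a_1}⋯K_θ^{a_θ}·L_1^{b_1}⋯L_θ^{b_θ}`
is injective with image `U⁰(q)`; in particular `U⁰(q)` is isomorphic to the group algebra
of `ℤ^{2θ}`. -/
theorem UqAlgebra_Uzero_group_algebra :
    ∃ f : AddMonoidAlgebra k ((Fin θ → ℤ) × (Fin θ → ℤ)) →ₐ[k] UqAlgebra k q,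
      (∀ a b : Fin θ → ℤ,
        f (AddMonoidAlgebra.single (a, b) 1) =
          (List.ofFn fun i : Fin θ => UKzpow k q i (a i)).prod *
            (List.ofFn fun i : Fin θ => ULzpow k q i (b i)).prod) ∧
      Function.Injective f ∧
      f.range = Uzero k q := by
  refine ⟨toralLift k q, fun a b => by simpa using toralMap_ofAdd k q a b, ?_,
    le_antisymm (range_toralLift_le_Uzero k q) (Uzero_le_range_toralLift k q)⟩
  · refine Function.Injective.of_comp (f := vermaRep k q) ?_
    rw [← AlgHom.coe_comp, vermaRep_comp_toralLift]
    exact liftToralRep_injective k q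
end

section
/- For each i ∈ {1, …, θ} there exists a unique pair of k-linear maps ∂_i^K, ∂_i^L : U⁺(q) → U⁺(q) such that for every E ∈ U⁺(q) the identity E·F_i − F_i·E = ∂_i^K(E)·K_i − L_i·∂_i^L(E) holds in 𝒰(q). Moreover these maps satisfy: ∂_i^K(1) = ∂_i^L(1) = 0; ∂_i^K(E_j) = ∂_i^L(E_j) = δ_{ij} for all j; ∂_i^K(E·E') = ∂_i^K(E)·(K_i E' K_i⁻) + E·∂_i^K(E'); and ∂_i^L(E·E') = ∂_i^L(E)·E' + (L_i⁻ E L_i)·∂_i^L(E') for all E, E' ∈ U⁺(q). -/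
variable (k : Type*) [Field k] {θ : ℕ}

variable (q : Fin θ → Fin θ → kˣ)

/-- The subalgebra `U⁺(q)` of `𝒰(q)` generated by the `E_i`. -/
noncomputable def Uplus : Subalgebra k (UqAlgebra k q) :=
  Algebra.adjoin k (Set.range fun i : Fin θ => UE k q i)

/-- `E_j` as an element of `U⁺(q)`. -/
noncomputable def UEplus (j : Fin θ) : Uplus k q :=
  ⟨UE k q j, Algebra.subset_adjoin (Set.mem_range_self j)⟩

/-- The defining property of the pair of skew-derivations `(∂_i^K, ∂_i^L)`:
`E·F_i − F_i·E = ∂_i^K(E)·K_i − L_i·∂_i^L(E)` for every `E ∈ U⁺(q)`. -/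
def IsSkewDerivPair (i : Fin θ) (dK dL : Uplus k q →ₗ[k] Uplus k q) : Prop :=
  ∀ E : Uplus k q,
    (E : UqAlgebra k q) * UF k q i - UF k q i * (E : UqAlgebra k q) =
      (dK E : UqAlgebra k q) * UK k q i - UL k q i * (dL E : UqAlgebra k q)

/-! Existence is an induction over `U⁺(q)`: on generators `[E_j, F_i] = δ_{ij} (K_i - L_i)`, and
`[EE', F_i] = E [E', F_i] + [E, F_i] E'` turns decompositions of `[E, F_i]` and `[E', F_i]` into
one of `[EE', F_i]`, since `U⁺(q)` is stable under conjugation by `K_i` and by `L_i⁻`. This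
recursion is exactly the pair of twisted Leibniz rules.

Uniqueness, which also gives linearity, says that `x K_i = L_i y` with `x, y ∈ U⁺(q)` forces
`x = y = 0`. For this, `𝒰(q)` acts on the space with basis the monomials `K^c L^d E_w`: `K`, `L`
and `E` by left multiplication and `F_i` through the defining relations. An element of `U⁺(q)`
maps `K^c L^d` into the span of the monomials with torus part `K^c L^d`, and can be read back
from its image there. Now `y = (L_i⁻ x L_i) (L_i⁻ K_i)` sends `1` into torus part `K_i L_i⁻`,
so its torus-`1` part vanishes and `y = 0`. -/

theorem Algebra.units_mul_mul_inv_mem_adjoin {R A : Type*} [CommSemiring R] [Semiring A]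
    [Algebra R A] {s : Set A} (u : Aˣ)
    (hs : ∀ x ∈ s, ↑u * x * ↑u⁻¹ ∈ Algebra.adjoin R s) {a : A}
    (ha : a ∈ Algebra.adjoin R s) : ↑u * a * ↑u⁻¹ ∈ Algebra.adjoin R s := by
  let conj := MulSemiringAction.toAlgHom R A (ConjAct.toConjAct u)
  have hle : (Algebra.adjoin R s).map conj ≤ Algebra.adjoin R s := by
    rw [AlgHom.map_adjoin, Algebra.adjoin_le_iff]
    rintro _ ⟨x, hx, rfl⟩
    exact hs x hx
  exact hle ⟨a, ha, rfl⟩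

theorem commutator_mul_eq_of_commutator_eq {A : Type*} [Ring A] (F : A) (K L : Aˣ)
    {a b x y x' y' : A} (ha : a * F - F * a = x * K - L * y)
    (hb : b * F - F * b = x' * K - L * y') :
    a * b * F - F * (a * b) =
      (x * (K * b * ↑K⁻¹) + a * x') * K - L * (y * b + (↑L⁻¹ * a * L) * y') := by
  calc a * b * F - F * (a * b) = a * (b * F - F * b) + (a * F - F * a) * b := by noncomm_ring
    _ = a * (x' * K - L * y') + (x * K - L * y) * b := by rw [ha, hb]
    _ = _ := by
      simp only [add_mul, mul_add, sub_mul, mul_sub, mul_assoc, Units.inv_mul, mul_one,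
        Units.mul_inv_cancel_left]
      abel

namespace UqAlgebra

/-- The basis vector `(c, d, w)` stands for the monomial `K^c L^d E_{w₁} ⋯ E_{wₙ}`. -/
abbrev MonomialSpace (θ : ℕ) : Type _ :=
  ((Fin θ → ℤ) × (Fin θ → ℤ) × List (Fin θ)) →₀ k

variable {k}

/-! ### Existence of the decomposition -/

theorem UK_mul_UE (i j : Fin θ) :
    UK k q i * UE k q j = (q i j : k) • (UE k q j * UK k q i) := by
  simpa [UK, UE] using RingQuot.mkAlgHom_rel k (URel.K_E (q := q) i j)

theorem UL_mul_UE (i j : Fin θ) :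
    UL k q i * UE k q j = (q j i : k)⁻¹ • (UE k q j * UL k q i) := by
  simpa [UL, UE] using RingQuot.mkAlgHom_rel k (URel.L_E (q := q) i j)

theorem UE_mul_UF_sub (i j : Fin θ) :
    UE k q j * UF k q i - UF k q i * UE k q j =
      (if i = j then 1 else 0) * UK k q i - UL k q i * (if i = j then 1 else 0) := by
  have h := RingQuot.mkAlgHom_rel k (URel.E_F (q := q) j i)
  rcases eq_or_ne i j with rfl | hij
  · simpa [UE, UF, UK, UL] using h
  · simpa [UE, UF, hij, Ne.symm hij] using h

noncomputable def UKunit (i : Fin θ) : (UqAlgebra k q)ˣ where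
  val := UK k q i
  inv := UKinv k q i
  val_inv := by simpa [UK, UKinv] using RingQuot.mkAlgHom_rel k (URel.K_Kinv (q := q) i)
  inv_val := by simpa [UK, UKinv] using RingQuot.mkAlgHom_rel k (URel.Kinv_K (q := q) i)

noncomputable def ULunit (i : Fin θ) : (UqAlgebra k q)ˣ where
  val := UL k q i
  inv := ULinv k q i
  val_inv := by simpa [UL, ULinv] using RingQuot.mkAlgHom_rel k (URel.L_Linv (q := q) i)
  inv_val := by simpa [UL, ULinv] using RingQuot.mkAlgHom_rel k (URel.Linv_L (q := q) i)

theorem UK_mul_mul_UKinv_mem (i : Fin θ) {a : UqAlgebra k q} (ha : a ∈ Uplus k q) :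
    UK k q i * a * UKinv k q i ∈ Uplus k q := by
  refine Algebra.units_mul_mul_inv_mem_adjoin (UKunit q i) ?_ ha
  rintro _ ⟨j, rfl⟩
  have : UK k q i * UE k q j * UKinv k q i = (q i j : k) • UE k q j := by
    rw [UK_mul_UE, smul_mul_assoc]
    exact congrArg _ ((UKunit q i).mul_inv_cancel_right _)
  exact this ▸ Subalgebra.smul_mem _ (Algebra.subset_adjoin (Set.mem_range_self j)) _

theorem ULinv_mul_mul_UL_mem (i : Fin θ) {a : UqAlgebra k q} (ha : a ∈ Uplus k q) :
    ULinv k q i * a * UL k q i ∈ Uplus k q := by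
  refine Algebra.units_mul_mul_inv_mem_adjoin (ULunit q i)⁻¹ ?_ ha
  rintro _ ⟨j, rfl⟩
  have : ULinv k q i * UE k q j * UL k q i = (q j i : k) • UE k q j := by
    have h : UE k q j * UL k q i = (q j i : k) • (UL k q i * UE k q j) := by
      rw [UL_mul_UE, smul_smul, mul_inv_cancel₀ (q j i).ne_zero, one_smul]
    rw [mul_assoc, h, mul_smul_comm]
    exact congrArg _ ((ULunit q i).inv_mul_cancel_left _)
  exact this ▸ Subalgebra.smul_mem _ (Algebra.subset_adjoin (Set.mem_range_self j)) _

theorem exists_mul_UF_sub_eq (i : Fin θ) {a : UqAlgebra k q} (ha : a ∈ Uplus k q) :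
    ∃ x ∈ Uplus k q, ∃ y ∈ Uplus k q,
      a * UF k q i - UF k q i * a = x * UK k q i - UL k q i * y := by
  induction ha using Algebra.adjoin_induction with
  | mem _ h =>
    obtain ⟨j, rfl⟩ := h
    exact ⟨_, by split_ifs <;> simp, _, by split_ifs <;> simp, UE_mul_UF_sub q i j⟩
  | algebraMap r => exact ⟨0, zero_mem _, 0, zero_mem _, by simp [Algebra.commutes]⟩
  | add a b _ _ iha ihb =>
    obtain ⟨x, hx, y, hy, hxy⟩ := iha
    obtain ⟨x', hx', y', hy', hxy'⟩ := ihb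
    refine ⟨x + x', add_mem hx hx', y + y', add_mem hy hy', ?_⟩
    rw [add_mul, mul_add, add_sub_add_comm, hxy, hxy']
    noncomm_ring
  | mul a b ha hb iha ihb =>
    obtain ⟨x, hx, y, hy, hxy⟩ := iha
    obtain ⟨x', hx', y', hy', hxy'⟩ := ihb
    exact ⟨_, add_mem (mul_mem hx (UK_mul_mul_UKinv_mem q i hb)) (mul_mem ha hx'),
      _, add_mem (mul_mem hy hb) (mul_mem (ULinv_mul_mul_UL_mem q i ha) hy'),
      commutator_mul_eq_of_commutator_eq _ (UKunit q i) (ULunit q i) hxy hxy'⟩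

/-! ### The representation on monomials -/

noncomputable def shift (c d : Fin θ → ℤ) : Module.End k (MonomialSpace k θ) :=
  Finsupp.lmapDomain k k fun p => (c + p.1, d + p.2.1, p.2.2)

@[simp]
theorem shift_single (c d c' d' : Fin θ → ℤ) (w : List (Fin θ)) (r : k) :
    shift c d (Finsupp.single (c', d', w) r) = Finsupp.single (c + c', d + d', w) r := by
  simp [shift]

theorem shift_mul_shift (c d c' d' : Fin θ → ℤ) :
    shift c d * shift c' d' = (shift (c + c') (d + d') : Module.End k (MonomialSpace k θ)) := by
  refine Finsupp.lhom_ext fun ⟨c'', d'', w⟩ r => ?_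
  simp [add_assoc]

theorem shift_apply_shift (c d c' d' : Fin θ → ℤ) (v : MonomialSpace k θ) :
    shift c d (shift c' d' v) = shift (c + c') (d + d') v := by
  rw [← Module.End.mul_apply, shift_mul_shift]

theorem shift_zero : (shift 0 0 : Module.End k (MonomialSpace k θ)) = 1 := by
  refine Finsupp.lhom_ext fun ⟨c, d, w⟩ r => ?_
  simp

/-- `E_j K^c L^d = chi q j c d • K^c L^d E_j`. -/
def chi (j : Fin θ) (c d : Fin θ → ℤ) : kˣ := ∏ m, (q m j ^ c m)⁻¹ * q j m ^ d m

theorem chi_add (j : Fin θ) (c d c' d' : Fin θ → ℤ) :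
    chi q j (c + c') (d + d') = chi q j c d * chi q j c' d' := by
  simp only [chi, ← Finset.prod_mul_distrib, Pi.add_apply, zpow_add, mul_inv]
  exact Finset.prod_congr rfl fun m _ => mul_mul_mul_comm _ _ _ _

theorem chi_single_zero (i j : Fin θ) : chi q j (Pi.single i 1) 0 = (q i j)⁻¹ := by
  rw [chi, Finset.prod_eq_single i (fun m _ hm => by simp [hm]) (by simp)]
  simp

theorem chi_zero_single (i j : Fin θ) : chi q j 0 (Pi.single i 1) = q j i := by
  rw [chi, Finset.prod_eq_single i (fun m _ hm => by simp [hm]) (by simp)]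
  simp

noncomputable def opE (j : Fin θ) : Module.End k (MonomialSpace k θ) :=
  Finsupp.lift _ k _ fun p => Finsupp.single (p.1, p.2.1, j :: p.2.2) (chi q j p.1 p.2.1 : k)

@[simp]
theorem opE_single (j : Fin θ) (c d : Fin θ → ℤ) (w : List (Fin θ)) (r : k) :
    opE q j (Finsupp.single (c, d, w) r) = Finsupp.single (c, d, j :: w) (r * chi q j c d) := by
  simp [opE]

/-- `gF q i w` is `F_i` applied to the basis vector `(0, 0, w)`, computed from
`F_i E_j = E_j F_i - δ_{ij} (K_i - L_i)` and `F_i · 1 = 0`. -/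
noncomputable def gF (i : Fin θ) : List (Fin θ) → MonomialSpace k θ
  | [] => 0
  | j :: w => opE q j (gF i w) -
      if i = j then Finsupp.single (Pi.single i 1, 0, w) 1 - Finsupp.single (0, Pi.single i 1, w) 1
      else 0

noncomputable def opF (i : Fin θ) : Module.End k (MonomialSpace k θ) :=
  Finsupp.lift _ k _ fun p => (↑(chi q i p.1 p.2.1)⁻¹ : k) • shift p.1 p.2.1 (gF q i p.2.2)

@[simp]
theorem opF_single (i : Fin θ) (c d : Fin θ → ℤ) (w : List (Fin θ)) (r : k) :
    opF q i (Finsupp.single (c, d, w) r) =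
      (r * ↑(chi q i c d)⁻¹) • shift c d (gF q i w) := by
  simp [opF, smul_smul]

theorem opE_mul_shift (j : Fin θ) (c d : Fin θ → ℤ) :
    opE q j * shift c d = (chi q j c d : k) • (shift c d * opE q j) := by
  refine Finsupp.lhom_ext fun ⟨c', d', w⟩ r => ?_
  simp only [Module.End.mul_apply, LinearMap.smul_apply, shift_single, opE_single,
    Finsupp.smul_single, smul_eq_mul, chi_add, Units.val_mul]
  ring_nf

theorem opF_mul_shift (j : Fin θ) (c d : Fin θ → ℤ) :
    opF q j * shift c d = (↑(chi q j c d)⁻¹ : k) • (shift c d * opF q j) := by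
  refine Finsupp.lhom_ext fun ⟨c', d', w⟩ r => ?_
  simp only [Module.End.mul_apply, LinearMap.smul_apply, shift_single, opF_single, map_smul,
    smul_smul, chi_add, mul_inv, Units.val_mul, shift_apply_shift]
  ring_nf

theorem opE_mul_opF_sub (i j : Fin θ) :
    opE q i * opF q j - opF q j * opE q i =
      if i = j then shift (Pi.single i 1) 0 - shift 0 (Pi.single i 1) else 0 := by
  refine Finsupp.lhom_ext fun ⟨c, d, w⟩ r => ?_
  have hE : opE q i (shift c d (gF q j w)) =
      (chi q i c d : k) • shift c d (opE q i (gF q j w)) := by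
    rw [← Module.End.mul_apply, opE_mul_shift]; rfl
  simp only [LinearMap.sub_apply, Module.End.mul_apply, opF_single, opE_single, map_smul, hE,
    gF, map_sub, smul_smul, smul_sub]
  rw [mul_right_comm r, sub_sub_cancel]
  rcases eq_or_ne i j with rfl | h
  · simp [add_comm c, add_comm d, smul_sub]
  · simp [h, Ne.symm h]

noncomputable def opGen : UGen θ → Module.End k (MonomialSpace k θ)
  | .E j => opE q j
  | .F j => opF q j
  | .K i => shift (Pi.single i 1) 0
  | .Kinv i => shift (-Pi.single i 1) 0
  | .L i => shift 0 (Pi.single i 1)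
  | .Linv i => shift 0 (-Pi.single i 1)

theorem exists_opGen_eq_shift {X : UGen θ} (hX : X.IsToral) : ∃ c d, opGen q X = shift c d := by
  cases X <;> first | exact hX.elim | exact ⟨_, _, rfl⟩

theorem lift_opGen_eq_of_rel {x y : FreeAlgebra k (UGen θ)} (h : URel k q x y) :
    FreeAlgebra.lift k (opGen q) x = FreeAlgebra.lift k (opGen q) y := by
  induction h with
  | toral_comm X Y hX hY =>
    obtain ⟨c, d, hcd⟩ := exists_opGen_eq_shift q hX
    obtain ⟨c', d', hcd'⟩ := exists_opGen_eq_shift q hY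
    simp [Ugen, hcd, hcd', shift_mul_shift, add_comm]
  | K_Kinv i | Kinv_K i | L_Linv i | Linv_L i => simp [Ugen, opGen, shift_mul_shift, shift_zero]
  | K_E i j => simp [Ugen, opGen, opE_mul_shift, chi_single_zero, smul_smul]
  | L_E i j => simp [Ugen, opGen, opE_mul_shift, chi_zero_single, smul_smul]
  | K_F i j => simp [Ugen, opGen, opF_mul_shift, chi_single_zero, smul_smul]
  | L_F i j => simp [Ugen, opGen, opF_mul_shift, chi_zero_single, smul_smul]
  | E_F i j => split_ifs with h <;> simp [Ugen, opGen, opE_mul_opF_sub, h]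

noncomputable def rep : UqAlgebra k q →ₐ[k] Module.End k (MonomialSpace k θ) :=
  RingQuot.liftAlgHom k ⟨FreeAlgebra.lift k (opGen q), fun _ _ ↦ lift_opGen_eq_of_rel q⟩

@[simp]
theorem rep_UE (j : Fin θ) : rep q (UE k q j) = opE q j := by
  simp [rep, UE, Ugen, opGen]

@[simp]
theorem rep_UK (i : Fin θ) : rep q (UK k q i) = shift (Pi.single i 1) 0 := by
  simp [rep, UK, Ugen, opGen]

@[simp]
theorem rep_ULinv (i : Fin θ) : rep q (ULinv k q i) = shift 0 (-Pi.single i 1) := by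
  simp [rep, ULinv, Ugen, opGen]

/-! ### Uniqueness of the decomposition -/

noncomputable def UEword (w : List (Fin θ)) : UqAlgebra k q := (w.map (UE k q)).prod

theorem Uplus_le_span_UEword :
    Subalgebra.toSubmodule (Uplus k q) ≤ Submodule.span k (Set.range (UEword q)) := by
  rw [Uplus, Algebra.adjoin_eq_span]
  refine Submodule.span_mono fun x hx => ?_
  induction hx using Submonoid.closure_induction with
  | mem _ h =>
    obtain ⟨j, rfl⟩ := h
    exact ⟨[j], by simp [UEword]⟩
  | one => exact ⟨[], rfl⟩
  | mul _ _ _ _ h h' =>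
    obtain ⟨v, rfl⟩ := h
    obtain ⟨w, rfl⟩ := h'
    exact ⟨v ++ w, by simp [UEword]⟩

def psi (c d : Fin θ → ℤ) (w : List (Fin θ)) : kˣ := (w.map fun j => chi q j c d).prod

theorem rep_UEword_single (c d : Fin θ → ℤ) (w : List (Fin θ)) :
    rep q (UEword q w) (Finsupp.single (c, d, []) 1) =
      Finsupp.single (c, d, w) (psi q c d w : k) := by
  induction w with
  | nil => simp [UEword, psi]
  | cons j w ih =>
    simp only [UEword, psi, List.map_cons, List.prod_cons, map_mul, Module.End.mul_apply] at ih ⊢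
    rw [ih, rep_UE, opE_single, Units.val_mul, mul_comm]

noncomputable def coeffAt (c d : Fin θ → ℤ) : MonomialSpace k θ →ₗ[k] UqAlgebra k q :=
  Finsupp.lift _ k _ fun p =>
    if p.1 = c ∧ p.2.1 = d then (↑(psi q c d p.2.2)⁻¹ : k) • UEword q p.2.2 else 0

theorem coeffAt_rep_single (c d c' d' : Fin θ → ℤ) {a : UqAlgebra k q} (ha : a ∈ Uplus k q) :
    coeffAt q c d (rep q a (Finsupp.single (c', d', []) 1)) =
      if c' = c ∧ d' = d then a else 0 := by
  let f := coeffAt q c d ∘ₗ LinearMap.applyₗ (Finsupp.single (c', d', []) 1) ∘ₗ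
    (rep q).toLinearMap
  let g : UqAlgebra k q →ₗ[k] UqAlgebra k q := if c' = c ∧ d' = d then LinearMap.id else 0
  have hfg : Set.EqOn f g (Submodule.span k (Set.range (UEword q))) := by
    refine LinearMap.eqOn_span ?_
    rintro _ ⟨w, rfl⟩
    simp only [f, g, LinearMap.comp_apply, LinearMap.applyₗ_apply_apply,
      AlgHom.toLinearMap_apply, rep_UEword_single, coeffAt, Finsupp.lift_apply]
    rw [Finsupp.sum_single_index (by simp)]
    split_ifs with h
    · obtain ⟨rfl, rfl⟩ := h
      simp [smul_smul]
    · simp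
  have := hfg (Uplus_le_span_UEword q ha)
  by_cases h : c' = c ∧ d' = d <;> simpa [f, g, h] using this

theorem eq_zero_of_mul_UK_eq_UL_mul (i : Fin θ) {a b : UqAlgebra k q} (ha : a ∈ Uplus k q)
    (hb : b ∈ Uplus k q) (h : a * UK k q i = UL k q i * b) : a = 0 ∧ b = 0 := by
  have hb' : b = (ULinv k q i * a * UL k q i) * (ULinv k q i * UK k q i) := by
    have h' : (ULunit q i : UqAlgebra k q) * b = a * UK k q i := h.symm
    calc b = ↑(ULunit q i)⁻¹ * (ULunit q i * b) := by simp
      _ = ↑(ULunit q i)⁻¹ * a * ULunit q i * (↑(ULunit q i)⁻¹ * UK k q i) := by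
        rw [h']; simp [mul_assoc]
  have hv : rep q (ULinv k q i * UK k q i) (Finsupp.single (0, 0, []) 1) =
      Finsupp.single (Pi.single i 1, -Pi.single i 1, []) 1 := by
    simp
  have hb0 : b = 0 := calc
    b = coeffAt q 0 0 (rep q b (Finsupp.single (0, 0, []) 1)) := by
      simpa using (coeffAt_rep_single q 0 0 0 0 hb).symm
    _ = 0 := by
      rw [hb', map_mul, Module.End.mul_apply, hv,
        coeffAt_rep_single q _ _ _ _ (ULinv_mul_mul_UL_mem q i ha)]
      simp
  refine ⟨?_, hb0⟩
  calc a = a * UK k q i * UKinv k q i := ((UKunit q i).mul_inv_cancel_right a).symm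
    _ = 0 := by rw [h, hb0, mul_zero, zero_mul]

/-! ### The skew derivations -/

noncomputable def commutatorUF (i : Fin θ) : Uplus k q →ₗ[k] UqAlgebra k q :=
  (LinearMap.mulRight k (UF k q i) - LinearMap.mulLeft k (UF k q i)) ∘ₗ
    (Uplus k q).val.toLinearMap

noncomputable def mulUK_sub_ULmul (i : Fin θ) : Uplus k q × Uplus k q →ₗ[k] UqAlgebra k q :=
  (LinearMap.mulRight k (UK k q i) ∘ₗ (Uplus k q).val.toLinearMap).coprod
    (-(LinearMap.mulLeft k (UL k q i) ∘ₗ (Uplus k q).val.toLinearMap))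

@[simp]
theorem commutatorUF_apply (i : Fin θ) (E : Uplus k q) :
    commutatorUF q i E = (E : UqAlgebra k q) * UF k q i - UF k q i * E := rfl

@[simp]
theorem mulUK_sub_ULmul_apply (i : Fin θ) (p : Uplus k q × Uplus k q) :
    mulUK_sub_ULmul q i p = (p.1 : UqAlgebra k q) * UK k q i - UL k q i * p.2 := by
  simp [mulUK_sub_ULmul, sub_eq_add_neg]

theorem mulUK_sub_ULmul_injective (i : Fin θ) : Function.Injective (mulUK_sub_ULmul q i) := by
  refine (injective_iff_map_eq_zero _).mpr fun ⟨x, y⟩ h => ?_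
  obtain ⟨hx, hy⟩ :=
    eq_zero_of_mul_UK_eq_UL_mul q i x.2 y.2 (sub_eq_zero.mp (by simpa using h))
  simp [Subtype.ext_iff, hx, hy]

theorem range_commutatorUF_le (i : Fin θ) :
    LinearMap.range (commutatorUF q i) ≤ LinearMap.range (mulUK_sub_ULmul q i) := by
  rintro _ ⟨E, rfl⟩
  obtain ⟨x, hx, y, hy, h⟩ := exists_mul_UF_sub_eq q i E.2
  exact ⟨(⟨x, hx⟩, ⟨y, hy⟩), by simp [h]⟩

variable {q}

theorem isSkewDerivPair_iff {i : Fin θ} {dK dL : Uplus k q →ₗ[k] Uplus k q} :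
    IsSkewDerivPair k q i dK dL ↔ mulUK_sub_ULmul q i ∘ₗ dK.prod dL = commutatorUF q i := by
  simp [IsSkewDerivPair, LinearMap.ext_iff, eq_comm]

theorem exists_isSkewDerivPair (i : Fin θ) : ∃ dK dL, IsSkewDerivPair k q i dK dL := by
  let e := LinearEquiv.ofInjective _ (mulUK_sub_ULmul_injective q i)
  let f := e.symm.toLinearMap ∘ₗ
    (commutatorUF q i).codRestrict _ fun E => range_commutatorUF_le q i ⟨E, rfl⟩
  refine ⟨LinearMap.fst k _ _ ∘ₗ f, LinearMap.snd k _ _ ∘ₗ f, isSkewDerivPair_iff.mpr ?_⟩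
  ext E
  exact congrArg Subtype.val (e.apply_symm_apply _)

end UqAlgebra

namespace IsSkewDerivPair

open UqAlgebra

variable {k} {q} {i : Fin θ} {dK dL : Uplus k q →ₗ[k] Uplus k q}

theorem eq_of_mul_UF_sub_eq (h : IsSkewDerivPair k q i dK dL) {E x y : Uplus k q}
    (hE : (E : UqAlgebra k q) * UF k q i - UF k q i * E = x * UK k q i - UL k q i * y) :
    dK E = x ∧ dL E = y := by
  have := mulUK_sub_ULmul_injective q i (a₁ := (dK E, dL E)) (a₂ := (x, y))
    (by simpa [← hE] using (h E).symm)
  simpa using this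

theorem unique {dK' dL' : Uplus k q →ₗ[k] Uplus k q}
    (h : IsSkewDerivPair k q i dK dL) (h' : IsSkewDerivPair k q i dK' dL') :
    dK' = dK ∧ dL' = dL :=
  ⟨LinearMap.ext fun E => (h'.eq_of_mul_UF_sub_eq (h E)).1,
    LinearMap.ext fun E => (h'.eq_of_mul_UF_sub_eq (h E)).2⟩

theorem map_one (h : IsSkewDerivPair k q i dK dL) : dK 1 = 0 ∧ dL 1 = 0 :=
  h.eq_of_mul_UF_sub_eq (by simp)

theorem apply_UEplus (h : IsSkewDerivPair k q i dK dL) (j : Fin θ) :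
    (dK (UEplus k q j) : UqAlgebra k q) = (if i = j then 1 else 0) ∧
      (dL (UEplus k q j) : UqAlgebra k q) = (if i = j then 1 else 0) := by
  have hE := UE_mul_UF_sub q i j
  split_ifs at hE ⊢ with hij
  · obtain ⟨hK, hL⟩ := h.eq_of_mul_UF_sub_eq (E := UEplus k q j) (x := 1) (y := 1)
      (by simpa [UEplus] using hE)
    simp [hK, hL]
  · obtain ⟨hK, hL⟩ := h.eq_of_mul_UF_sub_eq (E := UEplus k q j) (x := 0) (y := 0)
      (by simpa [UEplus] using hE)
    simp [hK, hL]

theorem map_mul (h : IsSkewDerivPair k q i dK dL) (E E' : Uplus k q) :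
    (dK (E * E') : UqAlgebra k q) = dK E * (UK k q i * E' * UKinv k q i) + E * dK E' ∧
      (dL (E * E') : UqAlgebra k q) = dL E * E' + (ULinv k q i * E * UL k q i) * dL E' := by
  have hmul := h.eq_of_mul_UF_sub_eq (E := E * E')
    (x := dK E * ⟨_, UK_mul_mul_UKinv_mem q i E'.2⟩ + E * dK E')
    (y := dL E * E' + ⟨_, ULinv_mul_mul_UL_mem q i E.2⟩ * dL E') (by
      push_cast
      exact commutator_mul_eq_of_commutator_eq _ (UKunit q i) (ULunit q i) (h E) (h E'))
  simpa [Subtype.ext_iff] using hmul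

end IsSkewDerivPair

/-- For each `i` there is a unique pair of `k`-linear maps `∂_i^K, ∂_i^L : U⁺(q) → U⁺(q)`
with `E·F_i − F_i·E = ∂_i^K(E)·K_i − L_i·∂_i^L(E)`; moreover they vanish on `1`, take the
value `δ_{ij}` on `E_j`, and satisfy the twisted Leibniz rules
`∂_i^K(E·E') = ∂_i^K(E)·(K_i E' K_i⁻) + E·∂_i^K(E')` and
`∂_i^L(E·E') = ∂_i^L(E)·E' + (L_i⁻ E L_i)·∂_i^L(E')`. -/
theorem UqAlgebra_skew_derivations (i : Fin θ) :
    (∃! p : (Uplus k q →ₗ[k] Uplus k q) × (Uplus k q →ₗ[k] Uplus k q),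
      IsSkewDerivPair k q i p.1 p.2) ∧
    (∀ dK dL : Uplus k q →ₗ[k] Uplus k q, IsSkewDerivPair k q i dK dL →
      dK 1 = 0 ∧ dL 1 = 0 ∧
      (∀ j : Fin θ,
        (dK (UEplus k q j) : UqAlgebra k q) = if i = j then 1 else 0) ∧
      (∀ j : Fin θ,
        (dL (UEplus k q j) : UqAlgebra k q) = if i = j then 1 else 0) ∧
      (∀ E E' : Uplus k q,
        (dK (E * E') : UqAlgebra k q) =
          (dK E : UqAlgebra k q) * (UK k q i * (E' : UqAlgebra k q) * UKinv k q i) +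
            (E : UqAlgebra k q) * (dK E' : UqAlgebra k q)) ∧
      (∀ E E' : Uplus k q,
        (dL (E * E') : UqAlgebra k q) =
          (dL E : UqAlgebra k q) * (E' : UqAlgebra k q) +
            (ULinv k q i * (E : UqAlgebra k q) * UL k q i) *
              (dL E' : UqAlgebra k q))) := by
  refine ⟨?_, fun dK dL h => ⟨h.map_one.1, h.map_one.2, fun j => (h.apply_UEplus j).1,
    fun j => (h.apply_UEplus j).2, fun E E' => (h.map_mul E E').1,
    fun E E' => (h.map_mul E E').2⟩⟩
  obtain ⟨dK, dL, h⟩ := UqAlgebra.exists_isSkewDerivPair (k := k) (q := q) i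
  exact ⟨(dK, dL), h, fun p hp => Prod.ext (h.unique hp).1 (h.unique hp).2⟩
end

section
/- Fix p ≠ i in {1, …, θ} and define recursively in 𝒰(q): E⁺_{i,0} := E_i and E⁺_{i,m+1} := E_p·E⁺_{i,m} − q_{pp}^m q_{pi}·E⁺_{i,m}·E_p (so that E⁺_{i,m} = (ad_c E_p)^m(E_i)). Then for every m ≥ 1 the following identity holds in 𝒰(q): E⁺_{i,m}·F_p − F_p·E⁺_{i,m} = (m)_{q_{pp}}·(q_{pp}^{m−1} q_{pi} q_{ip} − 1)·L_p·E⁺_{i,m−1}, where (m)_t := 1 + t + t² + ⋯ + t^{m−1} for t ∈ k. -/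
variable (k : Type*) [Field k] {θ : ℕ}

variable (q : Fin θ → Fin θ → kˣ)

/-- The iterated braided adjoint `E⁺_{i,m} = (ad_c E_p)^m(E_i)` in `𝒰(q)`:
`E⁺_{i,0} = E_i` and `E⁺_{i,m+1} = E_p·E⁺_{i,m} − q_{pp}^m q_{pi}·E⁺_{i,m}·E_p`. -/
noncomputable def UEad (q : Fin θ → Fin θ → kˣ) (p i : Fin θ) : ℕ → UqAlgebra k q
  | 0 => UE k q i
  | m + 1 => UE k q p * UEad q p i m -
      ((q p p : k) ^ m * (q p i : k)) • (UEad q p i m * UE k q p)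

/-
Write `X_m = E⁺_{i,m}`, `c_m = q_{pp}^m q_{pi}` and `[Y] = Y F_p − F_p Y`. As `[·]` is a
derivation and `[E_p] = K_p − L_p`,
`[X_{m+1}] = E_p [X_m] − c_m [X_m] E_p + (K_p − L_p) X_m − c_m X_m (K_p − L_p)`.
The `K_p`-terms cancel since `K_p X_m = c_m X_m K_p`, and `X_m L_p = q_{pp}^m q_{ip} L_p X_m` makes
the `L_p`-terms a multiple of `L_p X_m`. Inductively `[X_m]` is a multiple of `L_p X_{m-1}`, and
`E_p L_p = q_{pp} L_p E_p` turns the first two terms into `q_{pp}` times that multiple of `L_p X_m`.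
Starting from `[E_i, F_p] = 0`, the coefficients obey the recursion `(m+1)_t = 1 + t (m)_t`.
-/

lemma geom_sum_mul_pow_mul_sub_one_succ {R : Type*} [CommRing R] (t a b : R) (m : ℕ) :
    t * ((∑ s ∈ Finset.range (m + 1), t ^ s) * (t ^ m * a * b - 1)) +
        (t ^ (m + 1) * a * (t ^ (m + 1) * b) - 1) =
      (∑ s ∈ Finset.range (m + 1 + 1), t ^ s) * (t ^ (m + 1) * a * b - 1) := by
  have hgeom := geom_sum_mul t (m + 1)
  rw [Finset.sum_range_succ' (fun s => t ^ s) (m + 1)]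
  simp only [pow_succ, ← Finset.sum_mul] at hgeom ⊢
  linear_combination (-(t ^ m * t * a * b)) * hgeom

lemma mul_sub_smul_mul_commutator {R A : Type*} [CommRing R] [Ring A] [Algebra R A]
    (x y w : A) (c : R) :
    (x * y - c • (y * x)) * w - w * (x * y - c • (y * x)) =
      x * (y * w - w * y) - c • ((y * w - w * y) * x) +
        ((x * w - w * x) * y - c • (y * (x * w - w * x))) := by
  simp only [mul_sub, sub_mul, smul_sub, mul_smul_comm, smul_mul_assoc, mul_assoc]
  abel

section Relations

variable {k q}

lemma UK_mul_UE (a b : Fin θ) : UK k q a * UE k q b = (q a b : k) • (UE k q b * UK k q a) := by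
  simpa [UK, UE] using RingQuot.mkAlgHom_rel k (URel.K_E (k := k) (q := q) a b)

lemma UE_mul_UL (a b : Fin θ) : UE k q a * UL k q b = (q a b : k) • (UL k q b * UE k q a) := by
  have h := RingQuot.mkAlgHom_rel k (URel.L_E (k := k) (q := q) b a)
  simp only [UL, UE, Ugen, map_mul, map_smul] at h ⊢
  rw [h, smul_smul, mul_inv_cancel₀ (Units.ne_zero _), one_smul]

lemma UE_mul_UF_sub_UF_mul_UE_self (a : Fin θ) :
    UE k q a * UF k q a - UF k q a * UE k q a = UK k q a - UL k q a := by
  simpa [UE, UF, UK, UL] using RingQuot.mkAlgHom_rel k (URel.E_F (k := k) (q := q) a a)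

lemma UE_mul_UF_sub_UF_mul_UE_of_ne {a b : Fin θ} (hab : a ≠ b) :
    UE k q a * UF k q b - UF k q b * UE k q a = 0 := by
  simpa [UE, UF, hab] using RingQuot.mkAlgHom_rel k (URel.E_F (k := k) (q := q) a b)

end Relations

section Adjoint

variable {k q} (p i : Fin θ)

lemma UEad_zero : UEad k q p i 0 = UE k q i := rfl

lemma UEad_succ (m : ℕ) : UEad k q p i (m + 1) =
    UE k q p * UEad k q p i m - ((q p p : k) ^ m * (q p i : k)) • (UEad k q p i m * UE k q p) :=
  rfl

lemma UK_mul_UEad (j : Fin θ) (m : ℕ) : UK k q j * UEad k q p i m =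
    ((q j p : k) ^ m * (q j i : k)) • (UEad k q p i m * UK k q j) := by
  induction m with
  | zero => simpa [UEad_zero] using UK_mul_UE j i
  | succ m ih =>
    rw [UEad_succ, mul_sub, mul_smul_comm, ← mul_assoc, UK_mul_UE, smul_mul_assoc, mul_assoc, ih,
      ← mul_assoc (UK k q j), ih, smul_mul_assoc, mul_assoc, UK_mul_UE]
    simp only [sub_mul, smul_mul_assoc, mul_smul_comm, mul_assoc, smul_sub, smul_smul]
    module

lemma UEad_mul_UL (j : Fin θ) (m : ℕ) : UEad k q p i m * UL k q j =
    ((q p j : k) ^ m * (q i j : k)) • (UL k q j * UEad k q p i m) := by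
  induction m with
  | zero => simpa [UEad_zero] using UE_mul_UL i j
  | succ m ih =>
    have hEX : UE k q p * UEad k q p i m * UL k q j =
        ((q p j : k) ^ m * (q i j : k) * (q p j : k)) •
          (UL k q j * (UE k q p * UEad k q p i m)) := by
      rw [mul_assoc, ih, mul_smul_comm, ← mul_assoc, UE_mul_UL, smul_mul_assoc, smul_smul,
        mul_assoc (UL k q j)]
    have hXE : UEad k q p i m * UE k q p * UL k q j =
        ((q p j : k) * ((q p j : k) ^ m * (q i j : k))) •
          (UL k q j * (UEad k q p i m * UE k q p)) := by
      rw [mul_assoc, UE_mul_UL, mul_smul_comm, ← mul_assoc, ih, smul_mul_assoc, smul_smul,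
        mul_assoc (UL k q j)]
    rw [UEad_succ, sub_mul, smul_mul_assoc, hEX, hXE, mul_sub, mul_smul_comm]
    simp only [smul_sub, smul_smul, pow_succ]
    module

lemma UE_mul_UL_mul_UEad_sub (m : ℕ) :
    UE k q p * (UL k q p * UEad k q p i m) -
        ((q p p : k) ^ (m + 1) * (q p i : k)) • (UL k q p * UEad k q p i m * UE k q p) =
      (q p p : k) • (UL k q p * UEad k q p i (m + 1)) := by
  rw [← mul_assoc, UE_mul_UL, UEad_succ, mul_sub, mul_smul_comm]
  simp only [smul_mul_assoc, mul_assoc, smul_sub, smul_smul, pow_succ]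
  module

lemma UEad_succ_mul_UF_sub (m : ℕ) :
    UEad k q p i (m + 1) * UF k q p - UF k q p * UEad k q p i (m + 1) =
      UE k q p * (UEad k q p i m * UF k q p - UF k q p * UEad k q p i m) -
          ((q p p : k) ^ m * (q p i : k)) •
            ((UEad k q p i m * UF k q p - UF k q p * UEad k q p i m) * UE k q p) +
        ((q p p : k) ^ m * (q p i : k) * ((q p p : k) ^ m * (q i p : k)) - 1) •
          (UL k q p * UEad k q p i m) := by
  rw [UEad_succ, mul_sub_smul_mul_commutator, UE_mul_UF_sub_UF_mul_UE_self,
    sub_mul (UK k q p), mul_sub (UEad k q p i m), UK_mul_UEad, UEad_mul_UL]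
  module

end Adjoint

/-- For `p ≠ i` and every `m ≥ 1`,
`E⁺_{i,m}·F_p − F_p·E⁺_{i,m} = (m)_{q_{pp}}·(q_{pp}^{m−1} q_{pi} q_{ip} − 1)·L_p·E⁺_{i,m−1}`,
where `(m)_t = 1 + t + ⋯ + t^{m−1}`. -/
theorem UqAlgebra_UEad_commutator_F (p i : Fin θ) (hpi : p ≠ i) (m : ℕ) :
    UEad k q p i (m + 1) * UF k q p - UF k q p * UEad k q p i (m + 1) =
      ((∑ s ∈ Finset.range (m + 1), (q p p : k) ^ s) *
          ((q p p : k) ^ m * (q p i : k) * (q i p : k) - 1)) •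
        (UL k q p * UEad k q p i m) := by
  induction m with
  | zero =>
    rw [UEad_succ_mul_UF_sub, UEad_zero, UE_mul_UF_sub_UF_mul_UE_of_ne hpi.symm]
    simp
  | succ m ih =>
    rw [UEad_succ_mul_UF_sub, ih, ← geom_sum_mul_pow_mul_sub_one_succ, mul_smul_comm,
      smul_mul_assoc]
    set a := (∑ s ∈ Finset.range (m + 1), (q p p : k) ^ s) *
      ((q p p : k) ^ m * (q p i : k) * (q i p : k) - 1)
    linear_combination (norm := module) a • UE_mul_UL_mul_UEad_sub (k := k) (q := q) p i m
end
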